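/- arXiv:math/0402053 — 3 statements merged into one kernel-verified Lean document; each statement's English description precedes it below -/
import Mathlib

section
/- Let L ⊆ ℤⁿ be a zonotopal lattice and let (·,·) be a weighted inner product on ℝⁿ. Then every strict Voronoi vector of L is an elementary vector of L. -/
/-- The support of an integer vector: the set of its nonzero coordinates. -/
def supp {n : ℕ} (v : Fin n → ℤ) : Set (Fin n) := {i | v i ≠ 0}

/-- `v` is an elementary vector of the lattice `L ⊆ ℤⁿ`: it is a nonzero lattice
vector with entries in `{-1,0,+1}` whose support is minimal among supports of
nonzero lattice vectors. -/
def IsElementary {n : ℕ} (L : AddSubgroup (Fin n → ℤ)) (v : Fin n → ℤ) : Prop :=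
  v ∈ L ∧ v ≠ 0 ∧ (∀ i, v i = -1 ∨ v i = 0 ∨ v i = 1) ∧
    ∀ u ∈ L, u ≠ 0 → ¬ (supp u ⊂ supp v)

/-- A lattice `L ⊆ ℤⁿ` is zonotopal if every nonzero lattice vector's support
contains the support of some elementary vector. -/
def IsZonotopal {n : ℕ} (L : AddSubgroup (Fin n → ℤ)) : Prop :=
  ∀ v ∈ L, v ≠ 0 → ∃ u, IsElementary L u ∧ supp u ⊆ supp v

/-- The weighted inner product on `ℝⁿ` with weights `lam`. -/
def wip {n : ℕ} (lam : Fin n → ℝ) (x y : Fin n → ℝ) : ℝ := ∑ i, lam i * x i * y i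

/-- Coordinatewise cast of an integer vector to a real vector. -/
def icast {n : ℕ} (v : Fin n → ℤ) : Fin n → ℝ := fun i => (v i : ℝ)

/-- The real span `F` of a lattice `L ⊆ ℤⁿ`. -/
def latticeSpan {n : ℕ} (L : AddSubgroup (Fin n → ℤ)) : Submodule ℝ (Fin n → ℝ) :=
  Submodule.span ℝ (icast '' (L : Set (Fin n → ℤ)))

/-- The Dirichlet-Voronoi polytope of a lattice `L ⊆ ℤⁿ` with respect to the
weighted inner product with weights `lam`. -/
def DV {n : ℕ} (L : AddSubgroup (Fin n → ℤ)) (lam : Fin n → ℝ) : Set (Fin n → ℝ) :=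
  {x | x ∈ latticeSpan L ∧
    ∀ v ∈ L, wip lam x (icast v) ≤ wip lam (icast v) (icast v) / 2}

/-- `v` is a strict Voronoi vector of `L` with respect to the weighted inner
product with weights `lam`: `±v` are the unique shortest vectors of `v + 2L`. -/
def IsStrictVoronoi {n : ℕ} (L : AddSubgroup (Fin n → ℤ)) (lam : Fin n → ℝ)
    (v : Fin n → ℤ) : Prop :=
  v ∈ L ∧ v ≠ 0 ∧ ∀ w ∈ L, v + 2 • w ≠ v → v + 2 • w ≠ -v →
    wip lam (icast v) (icast v) <
      wip lam (icast (v + 2 • w)) (icast (v + 2 • w))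

/-- Two integer vectors are conformal if their entries never have opposite signs. -/
def IsConformal {n : ℕ} (v w : Fin n → ℤ) : Prop := ∀ i, 0 ≤ v i * w i

/-- The sign of a real number, as an integer in `{-1,0,+1}`. -/
noncomputable def sgnR (t : ℝ) : ℤ := if 0 < t then 1 else if t < 0 then -1 else 0

/-- A covector of the vector configuration `X`: the sign vector of the values of a
linear functional on the configuration. -/
def IsCovector {n d : ℕ} (X : Fin n → Fin d → ℝ) (s : Fin n → ℤ) : Prop :=
  ∃ f : (Fin d → ℝ) →ₗ[ℝ] ℝ, ∀ i, s i = sgnR (f (X i))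

/-- A cocircuit of the vector configuration `X`: a nonzero covector of minimal support. -/
def IsCocircuit {n d : ℕ} (X : Fin n → Fin d → ℝ) (s : Fin n → ℤ) : Prop :=
  IsCovector X s ∧ s ≠ 0 ∧ ∀ t, IsCovector X t → t ≠ 0 → ¬ (supp t ⊂ supp s)

/-- The lattice in `ℤⁿ` generated by the cocircuits of `X`. -/
def cocircuitLattice {n d : ℕ} (X : Fin n → Fin d → ℝ) : AddSubgroup (Fin n → ℤ) :=
  AddSubgroup.closure {s | IsCocircuit X s}

/-- A linear subspace of `ℝ^d` spanned by a subset of the configuration `X`. -/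
def SpannedSubspace {n d : ℕ} (X : Fin n → Fin d → ℝ)
    (W : Submodule ℝ (Fin d → ℝ)) : Prop :=
  ∃ S : Set (Fin n), W = Submodule.span ℝ (X '' S)

/-- McMullen's condition (II): every `(d-2)`-dimensional subspace spanned by vectors
of `X` is contained in exactly `2` or `3` hyperplanes spanned by vectors of `X`. -/
def ConditionII {n d : ℕ} (X : Fin n → Fin d → ℝ) : Prop :=
  ∀ W : Submodule ℝ (Fin d → ℝ), SpannedSubspace X W → Module.finrank ℝ W = d - 2 →
    {H : Submodule ℝ (Fin d → ℝ) |
        SpannedSubspace X H ∧ Module.finrank ℝ H = d - 1 ∧ W ≤ H}.ncard = 2 ∨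
    {H : Submodule ℝ (Fin d → ℝ) |
        SpannedSubspace X H ∧ Module.finrank ℝ H = d - 1 ∧ W ≤ H}.ncard = 3

/-- The zonotope generated by the vector configuration `X`, i.e. the Minkowski sum
of the segments `conv{xᵢ, -xᵢ}`. -/
def zonotope {n d : ℕ} (X : Fin n → Fin d → ℝ) : Set (Fin d → ℝ) :=
  {z | ∃ c : Fin n → ℝ, (∀ i, |c i| ≤ 1) ∧ z = ∑ i, c i • X i}

/-- `P` tiles `ℝ^d` face-to-face by translations: some family of translates of `P`
covers `ℝ^d`, and any two distinct translates intersect in a common (possibly empty)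
exposed face. -/
def TilesFaceToFace {d : ℕ} (P : Set (Fin d → ℝ)) : Prop :=
  ∃ T : Set (Fin d → ℝ),
    (∀ x, ∃ t ∈ T, x ∈ (t + ·) '' P) ∧
    ∀ s ∈ T, ∀ t ∈ T, s ≠ t →
      IsExposed ℝ ((s + ·) '' P) (((s + ·) '' P) ∩ ((t + ·) '' P)) ∧
      IsExposed ℝ ((t + ·) '' P) (((s + ·) '' P) ∩ ((t + ·) '' P))

-- negation of elementary is elementary
lemma IsElementary.neg {n : ℕ} {L : AddSubgroup (Fin n → ℤ)} {u : Fin n → ℤ}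
    (h : IsElementary L u) : IsElementary L (-u) := by
  obtain ⟨h1, h2, h3, h4⟩ := h
  refine ⟨L.neg_mem h1, by simpa using h2, fun i => by rcases h3 i with h|h|h <;> simp [h], ?_⟩
  have : supp (-u) = supp u := by ext i; simp [supp]
  rw [this]; exact h4

-- conformal elementary vector lemma
lemma conf_aux {n : ℕ} (L : AddSubgroup (Fin n → ℤ)) (hL : IsZonotopal L) :
    ∀ N : ℕ, ∀ v, v ∈ L → v ≠ 0 →
      (Finset.univ.filter (fun i => v i ≠ 0)).card ≤ N →
      ∃ u, IsElementary L u ∧ ∀ i, u i ≠ 0 → 0 < v i * u i := by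
  intro N
  induction N with
  | zero =>
    intro v hvL hv0 hcard
    exfalso
    obtain ⟨i, hi⟩ := Function.ne_iff.mp hv0
    have hi' : v i ≠ 0 := by simpa using hi
    have : i ∈ Finset.univ.filter (fun i => v i ≠ 0) := by simp [hi']
    have := Finset.card_pos.mpr ⟨i, this⟩
    omega
  | succ N ih =>
    intro v hvL hv0 hcard
    obtain ⟨u, hu, husupp⟩ := hL v hvL hv0
    obtain ⟨huL, hu0, hu3, humin⟩ := hu
    by_cases hc : ∀ i, u i ≠ 0 → 0 < v i * u i
    · exact ⟨u, ⟨huL, hu0, hu3, humin⟩, hc⟩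
    push_neg at hc
    obtain ⟨i₀', hi₀'u, hi₀'⟩ := hc
    have hvne : ∀ i, u i ≠ 0 → v i ≠ 0 := fun i hi => husupp hi
    -- product is nonzero whenever u i ≠ 0
    have hD' : v i₀' * u i₀' < 0 := by
      rcases lt_or_eq_of_le hi₀' with h | h
      · exact h
      · exact absurd h (mul_ne_zero (hvne i₀' hi₀'u) hi₀'u)
    set D : Finset (Fin n) := Finset.univ.filter (fun i => v i * u i < 0) with hDdef
    have hDne : D.Nonempty := ⟨i₀', by simp [hDdef, hD']⟩
    obtain ⟨i₀, hi₀D, hi₀min⟩ := D.exists_min_image (fun i => |v i|) hDne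
    have hi₀ : v i₀ * u i₀ < 0 := by simpa [hDdef] using hi₀D
    set m : ℤ := |v i₀| with hmdef
    set z : Fin n → ℤ := v + m • u with hzdef
    have hzL : z ∈ L := L.add_mem hvL (L.zsmul_mem huL m)
    have hzi : ∀ i, z i = v i + m * u i := by intro i; simp [hzdef]
    have hvi₀ : v i₀ ≠ 0 := fun h => by rw [h] at hi₀; simp at hi₀
    have hm0 : 0 < m := abs_pos.mpr hvi₀
    -- z i₀ = 0
    have hz0 : z i₀ = 0 := by
      rw [hzi]
      rcases hu3 i₀ with h | h | h <;> rw [h] at hi₀ ⊢ <;>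
        rcases abs_cases (v i₀) with ⟨h1, h2⟩ | ⟨h1, h2⟩ <;> rw [hmdef, h1] <;>
        simp at hi₀ ⊢ <;> omega
    -- conformality of z with v
    have hconf : ∀ i, z i ≠ 0 → 0 < z i * v i := by
      intro i hzi0
      rw [hzi] at hzi0 ⊢
      rcases hu3 i with h | h | h
      · -- u i = -1 : z i = v i - m
        rw [h] at hzi0 ⊢
        have hvi : v i ≠ 0 := hvne i (by rw [h]; norm_num)
        rcases lt_or_gt_of_ne hvi with hneg | hpos
        · -- v i < 0: product v*u = -v > 0, so i ∉ D; z i = v i - m < 0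
          nlinarith
        · -- v i > 0: i ∈ D, so m ≤ |v i| = v i
          have hiD : i ∈ D := by simp [hDdef, h]; nlinarith
          have := hi₀min i hiD
          have habs : |v i| = v i := abs_of_pos hpos
          rw [habs] at this
          -- z i = v i - m ≥ 0, ≠ 0 so > 0
          nlinarith [lt_of_le_of_ne (by nlinarith : (0:ℤ) ≤ v i + m * (-1))
            (Ne.symm hzi0)]
      · rw [h] at hzi0 ⊢
        simp only [mul_zero, add_zero] at hzi0 ⊢
        exact mul_pos_iff.mpr (by rcases lt_or_gt_of_ne hzi0 with hh | hh
                                  · right; exact ⟨hh, hh⟩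
                                  · left; exact ⟨hh, hh⟩)
      · -- u i = 1 : z i = v i + m
        rw [h] at hzi0 ⊢
        have hvi : v i ≠ 0 := hvne i (by rw [h]; norm_num)
        rcases lt_or_gt_of_ne hvi with hneg | hpos
        · have hiD : i ∈ D := by simp [hDdef, h]; nlinarith
          have := hi₀min i hiD
          have habs : |v i| = -v i := abs_of_neg hneg
          rw [habs] at this
          nlinarith [lt_of_le_of_ne (by nlinarith : v i + m * 1 ≤ 0) hzi0]
        · nlinarith
    by_cases hz : z = 0
    · -- v = -m • u, so -u is conformal elementary
      refine ⟨-u, IsElementary.neg ⟨huL, hu0, hu3, humin⟩, ?_⟩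
      intro i hi
      have hui : u i ≠ 0 := by simpa using hi
      have : v i + m * u i = 0 := by
        have h0 := congrFun hz i
        rw [hzi i] at h0
        simpa using h0
      have hvi : v i = -m * u i := by linarith
      rw [hvi]
      simp only [Pi.neg_apply]
      rcases hu3 i with h | h | h <;> rw [h] <;> first | (exfalso; exact hui h) | nlinarith
    · -- induction: supp z ⊊ supp v
      have hsub : Finset.univ.filter (fun i => z i ≠ 0) ⊆
          Finset.univ.filter (fun i => v i ≠ 0) := by
        intro i hi
        simp only [Finset.mem_filter, Finset.mem_univ, true_and] at hi ⊢
        intro hvi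
        exact absurd (hconf i hi) (by rw [hvi]; simp)
      have hstrict : Finset.univ.filter (fun i => z i ≠ 0) ⊂
          Finset.univ.filter (fun i => v i ≠ 0) := by
        refine ⟨hsub, fun hle => ?_⟩
        have hv0i₀ : v i₀ ≠ 0 := by intro h; rw [h] at hi₀; simp at hi₀
        have := hle (by simp [hv0i₀] : i₀ ∈ Finset.univ.filter (fun i => v i ≠ 0))
        simp only [Finset.mem_filter] at this
        exact this.2 hz0
      have hcard' : (Finset.univ.filter (fun i => z i ≠ 0)).card ≤ N := by
        have := Finset.card_lt_card hstrict
        omega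
      obtain ⟨u', hu', hconf'⟩ := ih z hzL hz hcard'
      refine ⟨u', hu', fun i hi => ?_⟩
      have h1 := hconf' i hi
      have h2 : z i ≠ 0 := fun h => by rw [h] at h1; simp at h1
      have h3 := hconf i h2
      nlinarith [mul_pos h1 h3, sq_nonneg (z i), mul_self_pos.mpr h2]

/-- In a zonotopal lattice, every strict Voronoi vector (with respect to
a weighted inner product) is an elementary vector. -/
theorem strictVoronoi_isElementary {n : ℕ} (L : AddSubgroup (Fin n → ℤ))
    (hL : IsZonotopal L) (lam : Fin n → ℝ) (hlam : ∀ i, 0 < lam i)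
    (v : Fin n → ℤ) (hv : IsStrictVoronoi L lam v) :
    IsElementary L v := by
  obtain ⟨hvL, hv0, hvor⟩ := hv
  obtain ⟨y, hy, hconf⟩ :=
    conf_aux L hL (Finset.univ.filter (fun i => v i ≠ 0)).card v hvL hv0 le_rfl
  have hyL := hy.1
  have hy0 := hy.2.1
  have hy3 := hy.2.2.1
  have happ : ∀ i, (v + 2 • (-y)) i = v i - 2 * y i := by
    intro i; simp [Pi.smul_apply]; ring
  have key : wip lam (icast (v + 2 • (-y))) (icast (v + 2 • (-y)))
      ≤ wip lam (icast v) (icast v) := by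
    unfold wip
    apply Finset.sum_le_sum
    intro i _
    have hterm : (0:ℤ) ≤ y i * (v i - y i) := by
      by_cases h : y i = 0
      · simp [h]
      · have h1 := hconf i h
        have h2 : y i * y i = 1 := by
          rcases hy3 i with hh | hh | hh <;> rw [hh] <;> norm_num <;> exact absurd hh h
        nlinarith
    unfold icast
    rw [happ]
    push_cast
    have hlam' := (hlam i).le
    have hR : (0:ℝ) ≤ (y i : ℝ) * ((v i : ℝ) - (y i : ℝ)) := by exact_mod_cast hterm
    nlinarith
  have hneg : -y ∈ L := L.neg_mem hyL
  by_cases h1 : v + 2 • (-y) = v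
  · exfalso; apply hy0; funext i
    have := congrFun h1 i
    simp [Pi.smul_apply] at this ⊢
    omega
  · by_cases h2 : v + 2 • (-y) = -v
    · have hvy : v = y := by
        funext i
        have := congrFun h2 i
        simp [Pi.smul_apply] at this
        omega
      rw [hvy]; exact hy
    · exact absurd key (not_le.mpr (hvor (-y) hneg h1 h2))
end

section
/- Let L ⊆ ℤⁿ be a zonotopal lattice and let (·,·) be a weighted inner product on ℝⁿ. Then every elementary vector of L is a strict Voronoi vector of L. -/
lemma key_le (a b : ℤ) (ha : a = -1 ∨ a = 0 ∨ a = 1) :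
    a * a ≤ (a + 2 * b) * (a + 2 * b) := by
  rcases ha with rfl | rfl | rfl
  · have h : b ≤ 0 ∨ 1 ≤ b := by omega
    rcases h with h | h <;> nlinarith
  · nlinarith [sq_nonneg b]
  · have h : b ≤ -1 ∨ 0 ≤ b := by omega
    rcases h with h | h <;> nlinarith

lemma key_lt (a b : ℤ) (ha : a = -1 ∨ a = 0 ∨ a = 1) (hb : b ≠ 0) (hab : b ≠ -a) :
    a * a < (a + 2 * b) * (a + 2 * b) := by
  rcases ha with rfl | rfl | rfl
  · have h : b ≤ -1 ∨ 2 ≤ b := by omega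
    rcases h with h | h <;> nlinarith
  · have h : b ≤ -1 ∨ 1 ≤ b := by omega
    rcases h with h | h <;> nlinarith
  · have h : b ≤ -2 ∨ 1 ≤ b := by omega
    rcases h with h | h <;> nlinarith

/-- In a zonotopal lattice, every elementary vector is a strict Voronoi
vector (with respect to any weighted inner product). -/
theorem isElementary_strictVoronoi {n : ℕ} (L : AddSubgroup (Fin n → ℤ))
    (hL : IsZonotopal L) (lam : Fin n → ℝ) (hlam : ∀ i, 0 < lam i)
    (v : Fin n → ℤ) (hv : IsElementary L v) :
    IsStrictVoronoi L lam v := by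
  obtain ⟨hvL, hv0, hv1, hvmin⟩ := hv
  refine ⟨hvL, hv0, fun w hwL h1 h2 => ?_⟩
  -- first find a coordinate where the strict inequality holds
  have hex : ∃ i, w i ≠ 0 ∧ w i ≠ -v i := by
    by_contra h
    push_neg at h
    -- then w = 0 or (supp w ⊆ supp v and w = -v on supp w)
    have hw0 : w ≠ 0 := by
      rintro rfl
      simp at h1
    have hsub : supp w ⊆ supp v := by
      intro i hi
      rcases eq_or_ne (w i) 0 with h0 | h0
      · exact absurd h0 hi
      · have := h i h0
        simp only [supp, Set.mem_setOf_eq]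
        intro hv0'
        rw [hv0'] at this
        exact h0 (by simpa using this)
    have hns := hvmin w hwL hw0
    have heq : supp w = supp v := by
      rcases hsub.eq_or_ssubset with h' | h'
      · exact h'
      · exact absurd h' hns
    have : w = -v := by
      funext i
      rcases eq_or_ne (w i) 0 with h0 | h0
      · have : i ∉ supp w := by simpa [supp] using h0
        rw [heq] at this
        have : v i = 0 := by simpa [supp] using this
        simp [h0, this]
      · simpa using h i h0
    apply h2
    rw [this]
    funext i
    simp only [Pi.add_apply, Pi.smul_apply, Pi.neg_apply, smul_eq_mul]
    ring
  obtain ⟨i0, hi0, hi0'⟩ := hex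
  have hicast : ∀ i, icast (v + 2 • w) i = ((v i + 2 * w i : ℤ) : ℝ) := by
    intro i
    simp [icast, two_smul]
    push_cast
    ring
  unfold wip
  apply Finset.sum_lt_sum
  · intro i _
    have h := key_le (v i) (w i) (hv1 i)
    have h' : ((v i : ℝ)) * (v i) ≤ ((v i + 2 * w i : ℤ) : ℝ) * ((v i + 2 * w i : ℤ) : ℝ) := by
      exact_mod_cast h
    rw [hicast i]
    calc lam i * icast v i * icast v i = lam i * ((v i : ℝ) * (v i : ℝ)) := by
          simp [icast]; ring
      _ ≤ lam i * (((v i + 2 * w i : ℤ) : ℝ) * ((v i + 2 * w i : ℤ) : ℝ)) :=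
          mul_le_mul_of_nonneg_left h' (hlam i).le
      _ = lam i * ((v i + 2 * w i : ℤ) : ℝ) * ((v i + 2 * w i : ℤ) : ℝ) := by ring
  · refine ⟨i0, Finset.mem_univ _, ?_⟩
    have h := key_lt (v i0) (w i0) (hv1 i0) hi0 hi0'
    have h' : ((v i0 : ℝ)) * (v i0) < ((v i0 + 2 * w i0 : ℤ) : ℝ) * ((v i0 + 2 * w i0 : ℤ) : ℝ) := by
      exact_mod_cast h
    rw [hicast i0]
    calc lam i0 * icast v i0 * icast v i0 = lam i0 * ((v i0 : ℝ) * (v i0 : ℝ)) := by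
          simp [icast]; ring
      _ < lam i0 * (((v i0 + 2 * w i0 : ℤ) : ℝ) * ((v i0 + 2 * w i0 : ℤ) : ℝ)) :=
          mul_lt_mul_of_pos_left h' (hlam i0)
      _ = lam i0 * ((v i0 + 2 * w i0 : ℤ) : ℝ) * ((v i0 + 2 * w i0 : ℤ) : ℝ) := by ring
end

section
/- Let L ⊆ ℤⁿ be a zonotopal lattice and let F = span_ℝ(L). Then the set of sign vectors of F equals the set of sign vectors of L: {(sgn x₁,…,sgn xₙ) : x ∈ F} = {(sgn v₁,…,sgn vₙ) : v ∈ L}. In particular, for every x ∈ F there exists v ∈ L with sgn(vᵢ) = sgn(xᵢ) for all i. -/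
section Aux

lemma sgnR_intCast (z : ℤ) : sgnR (z : ℝ) = Int.sign z := by
  unfold sgnR
  rcases lt_trichotomy z 0 with h | h | h
  · have h1 : (z : ℝ) < 0 := by exact_mod_cast h
    simp [h1, not_lt.mpr h1.le, Int.sign_eq_neg_one_of_neg h]
  · simp [h]
  · have h1 : (0:ℝ) < (z : ℝ) := by exact_mod_cast h
    simp [h1, Int.sign_eq_one_of_pos h]

lemma sgnR_mul_pos {a : ℝ} (ha : 0 < a) (t : ℝ) : sgnR (a * t) = sgnR t := by
  unfold sgnR
  rcases lt_trichotomy t 0 with h | h | h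
  · simp [h, not_lt.mpr h.le, mul_neg_of_pos_of_neg ha h,
      not_lt.mpr (mul_neg_of_pos_of_neg ha h).le]
  · simp [h]
  · simp [h, mul_pos ha h]

lemma sgnR_eq_of_close {x y : ℝ} (h : |y - x| < |x|) : sgnR y = sgnR x := by
  unfold sgnR
  rcases lt_trichotomy x 0 with hx | hx | hx
  · have hy : y < 0 := by
      have := abs_sub_abs_le_abs_sub y x
      rw [abs_of_neg hx] at h
      cases abs_cases (y - x) with
      | inl hc => nlinarith [hc.1, hc.2]
      | inr hc => nlinarith [hc.1, hc.2]
    simp [hx, hy, not_lt.mpr hx.le, not_lt.mpr hy.le]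
  · rw [hx, sub_zero, abs_zero] at h
    exact absurd h (not_lt.mpr (abs_nonneg _))
  · have hy : 0 < y := by
      rw [abs_of_pos hx] at h
      cases abs_cases (y - x) with
      | inl hc => nlinarith [hc.1, hc.2]
      | inr hc => nlinarith [hc.1, hc.2]
    simp [hx, hy]

/-- Approximation step: if every zero coordinate of the combination is zero on every
generator, a nearby rational coefficient vector gives the same sign vector. -/
lemma coreApprox {n m : ℕ} (w : Fin m → Fin n → ℚ) (c : Fin m → ℝ)
    (h : ∀ i, (∑ j, c j * (w j i : ℝ)) = 0 → ∀ j, w j i = 0) :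
    ∃ q : Fin m → ℚ, ∀ i,
      sgnR (∑ j, (q j : ℝ) * (w j i : ℝ)) = sgnR (∑ j, c j * (w j i : ℝ)) := by
  classical
  set x : Fin n → ℝ := fun i => ∑ j, c j * (w j i : ℝ) with hx
  set B : Fin n → ℝ := fun i => ∑ j, |(w j i : ℝ)| with hB
  have hBnn : ∀ i, 0 ≤ B i := fun i => Finset.sum_nonneg fun j _ => abs_nonneg _
  set S : Finset (Fin n) := Finset.univ.filter (fun i => x i ≠ 0) with hS
  obtain ⟨δ, hδpos, hδ⟩ : ∃ δ : ℝ, 0 < δ ∧ ∀ i, x i ≠ 0 → δ * B i < |x i| := by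
    by_cases hSne : S.Nonempty
    · refine ⟨S.inf' hSne (fun i => |x i| / (B i + 1)), ?_, ?_⟩
      · rw [Finset.lt_inf'_iff]
        intro i hi
        have hne : x i ≠ 0 := (Finset.mem_filter.mp hi).2
        exact div_pos (abs_pos.mpr hne) (by have := hBnn i; linarith)
      · intro i hi
        have hmem : i ∈ S := Finset.mem_filter.mpr ⟨Finset.mem_univ i, hi⟩
        have h1 := Finset.inf'_le (fun i => |x i| / (B i + 1)) hmem
        have hpos : 0 < S.inf' hSne (fun i => |x i| / (B i + 1)) := by
          rw [Finset.lt_inf'_iff]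
          intro k hk
          have hne : x k ≠ 0 := (Finset.mem_filter.mp hk).2
          exact div_pos (abs_pos.mpr hne) (by have := hBnn k; linarith)
        have hB1 : 0 < B i + 1 := by have := hBnn i; linarith
        have h2 : S.inf' hSne (fun i => |x i| / (B i + 1)) * (B i + 1) ≤ |x i| := by
          rw [← le_div_iff₀ hB1]; exact h1
        nlinarith [hBnn i]
    · refine ⟨1, one_pos, fun i hi => absurd (Finset.mem_filter.mpr ⟨Finset.mem_univ i, hi⟩)
        (fun hm => hSne ⟨i, hm⟩)⟩
  have hq : ∀ j : Fin m, ∃ q : ℚ, |c j - (q : ℝ)| < δ := fun j => exists_rat_near (c j) hδpos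
  choose q hqq using hq
  refine ⟨q, fun i => ?_⟩
  by_cases hxi : x i = 0
  · have hw : ∀ j, w j i = 0 := h i hxi
    have : (∑ j, (q j : ℝ) * (w j i : ℝ)) = 0 := by
      apply Finset.sum_eq_zero; intro j _; rw [hw j]; simp
    rw [this, show (∑ j, c j * (w j i : ℝ)) = 0 from hxi]
  · have hest : |(∑ j, (q j : ℝ) * (w j i : ℝ)) - x i| < |x i| := by
      have h1 : (∑ j, (q j : ℝ) * (w j i : ℝ)) - x i
          = ∑ j, ((q j : ℝ) - c j) * (w j i : ℝ) := by
        rw [hx]; rw [← Finset.sum_sub_distrib]; congr 1; funext j; ring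
      rw [h1]
      calc |∑ j, ((q j : ℝ) - c j) * (w j i : ℝ)|
          ≤ ∑ j, |((q j : ℝ) - c j) * (w j i : ℝ)| := Finset.abs_sum_le_sum_abs _ _
        _ ≤ ∑ j, δ * |(w j i : ℝ)| := by
            apply Finset.sum_le_sum; intro j _
            rw [abs_mul]
            apply mul_le_mul_of_nonneg_right _ (abs_nonneg _)
            rw [abs_sub_comm]
            exact (hqq j).le
        _ = δ * B i := by rw [hB, Finset.mul_sum]
        _ < |x i| := hδ i hxi
    exact sgnR_eq_of_close hest

lemma sum_elim {m : ℕ} (c a b : Fin m → ℝ) (d : ℝ) :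
    ∑ j, c j * (a j - b j * d) = (∑ j, c j * a j) - (∑ j, c j * b j) * d := by
  rw [Finset.sum_mul, ← Finset.sum_sub_distrib]
  exact Finset.sum_congr rfl fun j _ => by ring

/-- Core lemma: every real combination of rational vectors has the same sign vector as
some rational combination. Induction on the number of "bad" coordinates. -/
lemma coreLemma {n : ℕ} : ∀ (t m : ℕ) (w : Fin m → Fin n → ℚ) (c : Fin m → ℝ),
    {i : Fin n | (∑ j, c j * (w j i : ℝ)) = 0 ∧ ∃ j, w j i ≠ 0}.ncard ≤ t →
    ∃ q : Fin m → ℚ, ∀ i,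
      sgnR (∑ j, (q j : ℝ) * (w j i : ℝ)) = sgnR (∑ j, c j * (w j i : ℝ)) := by
  intro t
  induction t with
  | zero =>
    intro m w c hcard
    apply coreApprox
    intro i hxi j
    by_contra hw
    have hmem : i ∈ {i : Fin n | (∑ j, c j * (w j i : ℝ)) = 0 ∧ ∃ j, w j i ≠ 0} :=
      ⟨hxi, j, hw⟩
    have hfin : {i : Fin n | (∑ j, c j * (w j i : ℝ)) = 0 ∧ ∃ j, w j i ≠ 0}.Finite :=
      Set.toFinite _
    have := Set.ncard_pos (hfin) |>.mpr ⟨i, hmem⟩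
    omega
  | succ t ih =>
    intro m w c hcard
    by_cases hbad : ∃ k : Fin n, (∑ j, c j * (w j k : ℝ)) = 0 ∧ ∃ j0, w j0 k ≠ 0
    · obtain ⟨k, hxk, j0, hj0⟩ := hbad
      set α : Fin m → ℚ := fun j => w j k / w j0 k with hα
      set w' : Fin m → Fin n → ℚ := fun j i => w j i - α j * w j0 i with hw'
      have hcast : ∀ j i, ((w' j i : ℚ) : ℝ) = (w j i : ℝ) - (α j : ℝ) * (w j0 i : ℝ) := by
        intro j i; simp only [hw']; push_cast; ring
      have hsum0 : (∑ j, c j * (α j : ℝ)) = 0 := by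
        have h1 : (∑ j, c j * (α j : ℝ)) = (∑ j, c j * (w j k : ℝ)) / (w j0 k : ℝ) := by
          rw [Finset.sum_div]
          refine Finset.sum_congr rfl fun j _ => ?_
          simp only [hα]; push_cast; ring
        rw [h1, hxk, zero_div]
      have hx' : ∀ i, (∑ j, c j * (w' j i : ℝ)) = ∑ j, c j * (w j i : ℝ) := by
        intro i
        simp only [hcast]
        rw [sum_elim, hsum0, zero_mul, sub_zero]
      have hw'k : ∀ j, w' j k = 0 := by
        intro j
        show w j k - α j * w j0 k = 0
        show w j k - w j k / w j0 k * w j0 k = 0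
        rw [div_mul_cancel₀ _ hj0, sub_self]
      have hsub : {i : Fin n | (∑ j, c j * (w' j i : ℝ)) = 0 ∧ ∃ j, w' j i ≠ 0}
          ⊆ {i : Fin n | (∑ j, c j * (w j i : ℝ)) = 0 ∧ ∃ j, w j i ≠ 0} \ {k} := by
        rintro i ⟨hzero, j, hj⟩
        have hxi : (∑ j, c j * (w j i : ℝ)) = 0 := by rw [← hx' i]; exact hzero
        have hik : i ≠ k := by
          intro hik; subst hik
          exact hj (hw'k j)
        refine ⟨⟨hxi, ?_⟩, hik⟩
        by_contra hall
        push_neg at hall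
        apply hj
        show w j i - α j * w j0 i = 0
        rw [hall j, hall j0, mul_zero, sub_zero]
      have hk_mem : k ∈ {i : Fin n | (∑ j, c j * (w j i : ℝ)) = 0 ∧ ∃ j, w j i ≠ 0} :=
        ⟨hxk, j0, hj0⟩
      have hcard' : {i : Fin n | (∑ j, c j * (w' j i : ℝ)) = 0 ∧ ∃ j, w' j i ≠ 0}.ncard ≤ t := by
        have h1 := Set.ncard_le_ncard hsub (Set.toFinite _)
        have h2 := Set.ncard_diff_singleton_lt_of_mem hk_mem (Set.toFinite _)
        omega
      obtain ⟨q', hq'⟩ := ih m w' c hcard'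
      set β : ℚ := ∑ j, q' j * α j with hβ
      have hβR : (β : ℝ) = ∑ j, (q' j : ℝ) * (α j : ℝ) := by rw [hβ]; push_cast; rfl
      refine ⟨fun j => q' j - (if j = j0 then β else 0), fun i => ?_⟩
      have hrhs : (∑ j, (q' j : ℝ) * (w' j i : ℝ))
          = (∑ j, (q' j : ℝ) * (w j i : ℝ)) - (β : ℝ) * (w j0 i : ℝ) := by
        simp only [hcast]
        rw [sum_elim, hβR]
      have hlhs : (∑ j, ((q' j - (if j = j0 then β else 0) : ℚ) : ℝ) * (w j i : ℝ))
          = (∑ j, (q' j : ℝ) * (w j i : ℝ)) - (β : ℝ) * (w j0 i : ℝ) := by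
        have hterm : ∀ j ∈ Finset.univ, ((q' j - (if j = j0 then β else 0) : ℚ) : ℝ) * (w j i : ℝ)
            = (q' j : ℝ) * (w j i : ℝ) - (if j = j0 then (β : ℝ) * (w j0 i : ℝ) else 0) := by
          intro j _
          by_cases hj : j = j0
          · subst hj; simp only [if_pos rfl]; push_cast; ring
          · simp only [if_neg hj]; push_cast; ring
        rw [Finset.sum_congr rfl hterm, Finset.sum_sub_distrib,
          Finset.sum_ite_eq' Finset.univ j0 (fun _ => (β : ℝ) * (w j0 i : ℝ))]
        simp
      rw [hlhs, ← hrhs, hq' i, hx' i]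
    · push_neg at hbad
      apply coreApprox
      intro i hxi j
      exact hbad i hxi j

/-- Key step: every element of the real span of a lattice has the same sign vector
as some lattice vector. -/
lemma key_signs {n : ℕ} (L : AddSubgroup (Fin n → ℤ)) :
    ∀ x ∈ latticeSpan L, ∃ v ∈ L, ∀ i, Int.sign (v i) = sgnR (x i) := by
  intro x hx
  rw [latticeSpan, Submodule.mem_span_set'] at hx
  obtain ⟨m, f, g, hg⟩ := hx
  have hv : ∀ j : Fin m, ∃ v : Fin n → ℤ, v ∈ L ∧ icast v = (g j : Fin n → ℝ) := by
    intro j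
    obtain ⟨v, hvL, hvi⟩ := (g j).2
    exact ⟨v, hvL, hvi⟩
  choose v hvL hvi using hv
  set w : Fin m → Fin n → ℚ := fun j i => (v j i : ℚ) with hwdef
  have hxw : ∀ i, x i = ∑ j, f j * (w j i : ℝ) := by
    intro i
    rw [← hg]
    simp only [Finset.sum_apply, Pi.smul_apply, smul_eq_mul]
    congr 1; funext j
    rw [← hvi j]
    simp [icast, hwdef]
  obtain ⟨q, hq⟩ := coreLemma (n := n)
    {i : Fin n | (∑ j, f j * (w j i : ℝ)) = 0 ∧ ∃ j, w j i ≠ 0}.ncard m w f le_rfl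
  -- clear denominators
  set N : ℤ := ∏ j, ((q j).den : ℤ) with hN
  have hNpos : 0 < N := by
    rw [hN]
    apply Finset.prod_pos
    intro j _
    exact_mod_cast (q j).den_pos
  have hdvd : ∀ j : Fin m, ((q j).den : ℤ) ∣ N := by
    intro j
    exact Finset.dvd_prod_of_mem _ (Finset.mem_univ j)
  set a : Fin m → ℤ := fun j => (q j).num * (N / ((q j).den : ℤ)) with ha
  have haq : ∀ j, (a j : ℚ) = q j * ((N : ℤ) : ℚ) := by
    intro j
    obtain ⟨e, he⟩ := hdvd j
    have hden : ((q j).den : ℤ) ≠ 0 := by exact_mod_cast (q j).den_nz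
    have hdiv : N / ((q j).den : ℤ) = e := by rw [he, Int.mul_ediv_cancel_left _ hden]
    have hnum : ((q j).num : ℚ) = q j * ((q j).den : ℚ) := by rw [Rat.mul_den_eq_num]
    rw [ha]
    simp only [hdiv]
    push_cast [he]
    rw [hnum]
    ring
  have haR : ∀ j, ((a j : ℤ) : ℝ) = (q j : ℝ) * ((N : ℤ) : ℝ) := by
    intro j
    have h2 : ((a j : ℚ) : ℝ) = ((q j : ℚ) : ℝ) * (((N : ℤ) : ℚ) : ℝ) := by
      rw [haq j]; push_cast; ring
    push_cast at h2
    exact_mod_cast h2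
  refine ⟨∑ j, a j • v j, AddSubgroup.sum_mem L (fun j _ => AddSubgroup.zsmul_mem L (hvL j) _), ?_⟩
  intro i
  have hvi2 : (((∑ j, a j • v j) i : ℤ) : ℝ) = ((N : ℤ) : ℝ) * ∑ j, (q j : ℝ) * (w j i : ℝ) := by
    have hsum : ((∑ j, a j • v j) i) = ∑ j, a j * v j i := by
      simp [Finset.sum_apply, smul_eq_mul]
    rw [hsum]
    push_cast
    rw [Finset.mul_sum]
    refine Finset.sum_congr rfl fun j _ => ?_
    have hwv : ((w j i : ℚ) : ℝ) = ((v j i : ℤ) : ℝ) := by simp [hwdef]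
    rw [hwv, haR j]
    ring
  rw [← sgnR_intCast, hvi2, sgnR_mul_pos (by exact_mod_cast hNpos), hq i, hxw i]

end Aux

/-- For a zonotopal lattice `L` with real span `F`, the sign vectors of
`F` are exactly the sign vectors of `L`; in particular every `x ∈ F` has the same
sign vector as some lattice vector. -/
theorem signVectors_span_eq_signVectors_lattice {n : ℕ}
    (L : AddSubgroup (Fin n → ℤ)) (hL : IsZonotopal L) :
    ({s : Fin n → ℤ | ∃ x ∈ latticeSpan L, s = fun i => sgnR (x i)} =
      {s : Fin n → ℤ | ∃ v ∈ L, s = fun i => Int.sign (v i)}) ∧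
    ∀ x ∈ latticeSpan L, ∃ v ∈ L, ∀ i, Int.sign (v i) = sgnR (x i) := by
  constructor
  · ext s
    constructor
    · rintro ⟨x, hx, rfl⟩
      obtain ⟨v, hv, hsgn⟩ := key_signs L x hx
      exact ⟨v, hv, funext fun i => (hsgn i).symm⟩
    · rintro ⟨v, hv, rfl⟩
      refine ⟨icast v, Submodule.subset_span ⟨v, hv, rfl⟩, funext fun i => ?_⟩
      exact (sgnR_intCast (v i)).symm
  · exact key_signs L
end
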